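/- Run Algorithm 2 on an unweighted SPPT instance with distortion at most μ, and let θ = ⌈μ²⌉. If a job q is released at time t (the procedure UponJobRelease(q) is called), then for every real x ≥ 0: cov(x + θ, t) ≥ cov(x, t⁻) + p(q). -/

import Mathlib

open MeasureTheory
open scoped Classical

noncomputable section

/-- A configuration of Algorithm 2: the pending jobs are kept in two bins,
a full bin `QF` and a partial bin `QP`; each bin carries a bijective priority map
onto `{1, …, size of bin}`, and every pending job has a remaining processing time. -/
structure Config (n : ℕ) where
  QF : Finset (Fin n)
  QP : Finset (Fin n)
  rem : Fin n → ℝ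
  prF : Fin n → ℕ
  prP : Fin n → ℕ
  disj : Disjoint QF QP
  bijF : Set.BijOn prF (QF : Set (Fin n)) (Set.Icc 1 QF.card)
  bijP : Set.BijOn prP (QP : Set (Fin n)) (Set.Icc 1 QP.card)

variable {n : ℕ}

/-- `wbase q`: the number of jobs in `q`'s own bin whose priority is at most that
of `q` (for unit weights this is the total weight of `base(q)`). -/
def wbase (C : Config n) (q : Fin n) : ℕ :=
  if q ∈ C.QF then (C.QF.filter fun a => C.prF a ≤ C.prF q).card
  else (C.QP.filter fun a => C.prP a ≤ C.prP q).card

/-- The volume covered by a bar at height `x`: the sum over pending jobs `q`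
of the remaining processing time of `q` if `x ≥ wbase q`, and `0` otherwise. -/
def cov (C : Config n) (x : ℝ) : ℝ :=
  ∑ q ∈ C.QF ∪ C.QP, if (wbase C q : ℝ) ≤ x then C.rem q else 0

/-- `V`: the total remaining volume of pending jobs. -/
def vol (C : Config n) : ℝ :=
  ∑ q ∈ C.QF ∪ C.QP, C.rem q

/-- The ordered pair `(q₁, q₂)` of jobs of the full bin is a violation if `q₁` has
higher priority but `μ · p̃ q₂ ≤ p̃ q₁`. -/
def IsViolation (μ : ℝ) (pt : Fin n → ℝ) (C : Config n) (q₁ q₂ : Fin n) : Prop :=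
  q₁ ∈ C.QF ∧ q₂ ∈ C.QF ∧ C.prF q₂ < C.prF q₁ ∧ μ * pt q₂ ≤ pt q₁

/-- No ordered pair of jobs of the full bin forms a violation. -/
def NoViolations (μ : ℝ) (pt : Fin n → ℝ) (C : Config n) : Prop :=
  ∀ q₁ q₂, ¬ IsViolation μ pt C q₁ q₂

/-- The priorities of the full bin after releasing job `q`: `q` is first inserted at the
top (priority `|QF| + 1`), and then the cyclic rotation fixing all the violations
involving `q` is applied: `q` receives the lowest priority of a job in violation with
it, each job in violation with `q` moves up to the priority of the next higher-priority
violating job (the highest-priority one receiving `q`'s top priority `|QF| + 1`),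
and all other priorities are unchanged. -/
def rotatedPr (μ : ℝ) (pt : Fin n → ℝ) (C : Config n) (q : Fin n) : Fin n → ℕ :=
  fun a =>
    if a = q then
      WithBot.unbotD (C.QF.card + 1) ((C.QF.filter fun b => μ * pt b ≤ pt q).image C.prF).min
    else if a ∈ C.QF.filter (fun b => μ * pt b ≤ pt q) then
      WithBot.unbotD (C.QF.card + 1)
        ((((C.QF.filter fun b => μ * pt b ≤ pt q).filter
            fun b => C.prF a < C.prF b).image C.prF).min)
    else C.prF a

/-- `UponJobRelease q` of Algorithm 2 turns configuration `C` into `C'`: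
the new job `q` (full, so its remaining time is `p q`) enters the full bin and the
rotation fixing all violations involving `q` is applied. -/
def ReleaseStep (μ : ℝ) (p pt : Fin n → ℝ) (C C' : Config n) (q : Fin n) : Prop :=
  q ∉ C.QF ∧ q ∉ C.QP ∧
  C'.QF = insert q C.QF ∧ C'.QP = C.QP ∧
  C'.rem q = p q ∧ (∀ a, a ≠ q → C'.rem a = C.rem a) ∧
  (∀ a ∈ C'.QF, C'.prF a = rotatedPr μ pt C q a) ∧
  (∀ a ∈ C.QP, C'.prP a = C.prP a)

/-- `UponHeavyF` of Algorithm 2 turns configuration `C` into `C'`: it is called as soon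
as `|QF| > |QP|` (so `|QF| = |QP| + 1`), and it moves the top-priority job of the full
bin to the top priority of the partial bin (LIFO). -/
def MoveStep (C C' : Config n) (q : Fin n) : Prop :=
  C.QF.card = C.QP.card + 1 ∧ q ∈ C.QF ∧ C.prF q = C.QF.card ∧
  C'.QF = C.QF.erase q ∧ C'.QP = insert q C.QP ∧ C'.rem = C.rem ∧
  (∀ a ∈ C'.QF, C'.prF a = C.prF a) ∧ (∀ a ∈ C.QP, C'.prP a = C.prP a) ∧
  C'.prP q = C.QP.card + 1

/-- Processing for a duration `d`: the top-priority job of the partial bin is processed,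
decreasing its remaining time by `d`. -/
def ProcessStep (C C' : Config n) (q : Fin n) (d : ℝ) : Prop :=
  C.QF.card ≤ C.QP.card ∧ q ∈ C.QP ∧ C.prP q = C.QP.card ∧
  0 ≤ d ∧ d ≤ C.rem q ∧
  C'.QF = C.QF ∧ C'.QP = C.QP ∧ C'.prF = C.prF ∧ C'.prP = C.prP ∧
  C'.rem q = C.rem q - d ∧ (∀ a, a ≠ q → C'.rem a = C.rem a)

/-- A fully processed job (the top-priority job of the partial bin, with zero
remaining time) is completed and leaves the system. -/
def CompleteStep (C C' : Config n) (q : Fin n) : Prop :=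
  q ∈ C.QP ∧ C.prP q = C.QP.card ∧ C.rem q = 0 ∧
  C'.QF = C.QF ∧ C'.QP = C.QP.erase q ∧ C'.prF = C.prF ∧
  (∀ a ∈ C'.QP, C'.prP a = C.prP a) ∧ C'.rem = C.rem
/-!
Both bins carry bijective priorities, so `wbase` is just the priority and `cov x` is the volume
of the jobs of priority at most `k = ⌊x⌋`. A release only rotates the priorities of `q` and of
its violators (the jobs `b` of the full bin with `μ p̃ b ≤ p̃ q`, hence `p b ≤ p q`). If the
window of priorities `(k, k + θ]` contains a violator, or the full bin is too small to fill it,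
then `q` and every job covered before are covered at level `k + θ`. Otherwise the window holds
`θ ≥ μ²` non-violators, each of volume more than `p q / μ²`, so the window alone carries
`p q`; and at level `k` the rotation loses at most the covered violator `b` of highest
priority, whose place is taken by `q`.
-/

open Finset

section UnbotDMin

variable {α : Type*} [LinearOrder α] {s : Finset α} {b d : α}

-- `rotatedPr` reads `s.min : WithTop α` through `WithBot.unbotD` (both are `Option α`), so the
-- value is `d` exactly when `s = ∅`.

lemma unbotD_min_le_of_mem (h : b ∈ s) : WithBot.unbotD d s.min ≤ b := by
  obtain ⟨v, hv⟩ := Finset.min_of_mem h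
  have hle : s.min ≤ (b : WithTop α) := Finset.min_le h
  rw [hv] at hle ⊢
  exact WithTop.coe_le_coe.mp hle

lemma unbotD_min_le_default (h : ∀ b ∈ s, b ≤ d) : WithBot.unbotD d s.min ≤ d := by
  rcases s.eq_empty_or_nonempty with rfl | ⟨a, ha⟩
  · exact le_rfl
  · obtain ⟨v, hv⟩ := Finset.min_of_mem ha
    rw [hv]
    exact h v (Finset.mem_of_min hv)

end UnbotDMin

section Priorities

variable {α : Type*} {B : Finset α} {f : α → ℕ}

lemma card_filter_comp_of_bijOn (hf : Set.BijOn f B (Set.Icc 1 #B)) (P : ℕ → Prop)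
    [DecidablePred P] : #(B.filter fun a => P (f a)) = #((Icc 1 #B).filter P) := by
  rw [← coe_Icc] at hf
  refine card_nbij f (fun a ha => ?_) (hf.injOn.mono (coe_subset.mpr (filter_subset _ _)))
    (fun m hm => ?_)
  · rw [mem_coe, mem_filter] at ha ⊢
    exact ⟨hf.mapsTo ha.1, ha.2⟩
  · rw [mem_coe, mem_filter] at hm
    obtain ⟨a, ha, rfl⟩ := hf.surjOn hm.1
    exact ⟨a, mem_filter.mpr ⟨ha, hm.2⟩, rfl⟩

lemma card_filter_le_of_bijOn (hf : Set.BijOn f B (Set.Icc 1 #B)) {j : ℕ} (hj : j ≤ #B) :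
    #(B.filter fun a => f a ≤ j) = j := by
  rw [card_filter_comp_of_bijOn hf (· ≤ j)]
  have : (Icc 1 #B).filter (· ≤ j) = Icc 1 j := by
    ext m
    simp only [mem_filter, mem_Icc]
    omega
  simp [this]

lemma card_filter_window_of_bijOn (hf : Set.BijOn f B (Set.Icc 1 #B)) {k θ : ℕ}
    (hkθ : k + θ ≤ #B) : #(B.filter fun a => k < f a ∧ f a ≤ k + θ) = θ := by
  rw [card_filter_comp_of_bijOn hf (fun m => k < m ∧ m ≤ k + θ)]
  have : (Icc 1 #B).filter (fun m => k < m ∧ m ≤ k + θ) = Icc (k + 1) (k + θ) := by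
    ext m
    simp only [mem_filter, mem_Icc]
    omega
  simp [this]

end Priorities

lemma Config.prF_le_card (C : Config n) {a : Fin n} (ha : a ∈ C.QF) :
    C.prF a ≤ #C.QF :=
  (Set.mem_Icc.mp (C.bijF.mapsTo ha)).2

lemma wbase_of_mem_QF {C : Config n} {a : Fin n} (ha : a ∈ C.QF) :
    wbase C a = C.prF a := by
  rw [wbase, if_pos ha]
  exact card_filter_le_of_bijOn C.bijF (C.prF_le_card ha)

lemma wbase_of_mem_QP {C : Config n} {a : Fin n} (ha : a ∈ C.QP) :
    wbase C a = C.prP a := by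
  rw [wbase, if_neg (disjoint_right.mp C.disj ha)]
  exact card_filter_le_of_bijOn C.bijP (Set.mem_Icc.mp (C.bijP.mapsTo ha)).2

section BinCov

variable {α : Type*} {B : Finset α} {pr pr' : α → ℕ} {rem rem' : α → ℝ} {x y : ℝ}

def binCov (B : Finset α) (pr : α → ℕ) (rem : α → ℝ) (x : ℝ) : ℝ :=
  ∑ a ∈ B, if (pr a : ℝ) ≤ x then rem a else 0

lemma binCov_congr (hpr : ∀ a ∈ B, pr a = pr' a) (hrem : ∀ a ∈ B, rem a = rem' a) :
    binCov B pr rem x = binCov B pr' rem' x :=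
  sum_congr rfl fun a ha => by rw [hpr a ha, hrem a ha]

lemma binCov_mono (hrem : ∀ a ∈ B, 0 ≤ rem a) (hxy : x ≤ y) :
    binCov B pr rem x ≤ binCov B pr rem y := by
  refine sum_le_sum fun a ha => ?_
  split_ifs with hx hy hy
  · exact le_rfl
  · exact absurd (hx.trans hxy) hy
  · exact hrem a ha
  · exact le_rfl

lemma binCov_eq_sum_filter (hx : 0 ≤ x) :
    binCov B pr rem x = ∑ a ∈ B.filter (fun a => pr a ≤ ⌊x⌋₊), rem a := by
  simp only [binCov, sum_filter, Nat.le_floor_iff hx]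

end BinCov

lemma cov_eq_binCov_add_binCov (C : Config n) (x : ℝ) :
    cov C x = binCov C.QF C.prF C.rem x + binCov C.QP C.prP C.rem x := by
  rw [cov, sum_union C.disj]
  congr 1
  · exact sum_congr rfl fun a ha => by rw [wbase_of_mem_QF ha]
  · exact sum_congr rfl fun a ha => by rw [wbase_of_mem_QP ha]

lemma le_sum_of_le_mul_of_le_card {ι : Type*} {s : Finset ι} {w : ι → ℝ} {v c : ℝ}
    (hv : 0 ≤ v) (hc : 0 < c) (hcard : c ≤ #s) (h : ∀ i ∈ s, v ≤ c * w i) :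
    v ≤ ∑ i ∈ s, w i := by
  have hsum : (#s : ℝ) * (v / c) ≤ ∑ i ∈ s, w i := by
    simpa [nsmul_eq_mul] using card_nsmul_le_sum s w (v / c) fun i hi => by
      rw [div_le_iff₀' hc]; exact h i hi
  calc v = c * (v / c) := (mul_div_cancel₀ v hc.ne').symm
    _ ≤ #s * (v / c) := by gcongr
    _ ≤ ∑ i ∈ s, w i := hsum

section Rotation

variable {μ : ℝ} {pt : Fin n → ℝ} {C : Config n} {q a b : Fin n}

def violators (μ : ℝ) (pt : Fin n → ℝ) (C : Config n) (q : Fin n) : Finset (Fin n) :=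
  C.QF.filter fun b => μ * pt b ≤ pt q

lemma violators_subset : violators μ pt C q ⊆ C.QF :=
  filter_subset _ _

lemma rotatedPr_self :
    rotatedPr μ pt C q q = WithBot.unbotD (#C.QF + 1) ((violators μ pt C q).image C.prF).min :=
  if_pos rfl

lemma rotatedPr_of_mem_violators (hq : q ∉ C.QF) (ha : a ∈ violators μ pt C q) :
    rotatedPr μ pt C q a = WithBot.unbotD (#C.QF + 1)
      (((violators μ pt C q).filter fun b => C.prF a < C.prF b).image C.prF).min := by
  have haq : a ≠ q := fun h => hq (h ▸ violators_subset ha)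
  simp only [rotatedPr, if_neg haq]
  exact if_pos ha

lemma rotatedPr_of_not_mem_violators (hq : q ∉ C.QF) (ha : a ∈ C.QF)
    (hv : a ∉ violators μ pt C q) : rotatedPr μ pt C q a = C.prF a := by
  have haq : a ≠ q := fun h => hq (h ▸ ha)
  simp only [rotatedPr, if_neg haq]
  exact if_neg hv

lemma rotatedPr_self_le (hb : b ∈ violators μ pt C q) :
    rotatedPr μ pt C q q ≤ C.prF b := by
  rw [rotatedPr_self]
  exact unbotD_min_le_of_mem (mem_image_of_mem _ hb)

lemma rotatedPr_le_of_mem_violators (hq : q ∉ C.QF) (ha : a ∈ violators μ pt C q)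
    (hb : b ∈ violators μ pt C q) (hab : C.prF a < C.prF b) :
    rotatedPr μ pt C q a ≤ C.prF b := by
  rw [rotatedPr_of_mem_violators hq ha]
  exact unbotD_min_le_of_mem (mem_image_of_mem _ (mem_filter.mpr ⟨hb, hab⟩))

lemma rotatedPr_le_card_succ (hq : q ∉ C.QF) (ha : a ∈ insert q C.QF) :
    rotatedPr μ pt C q a ≤ #C.QF + 1 := by
  have hbound : ∀ s ⊆ C.QF, ∀ m ∈ s.image C.prF, m ≤ #C.QF + 1 := by
    intro s hs m hm
    obtain ⟨b, hb, rfl⟩ := mem_image.mp hm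
    exact (C.prF_le_card (hs hb)).trans (Nat.le_succ _)
  rcases mem_insert.mp ha with rfl | haF
  · rw [rotatedPr_self]
    exact unbotD_min_le_default (hbound _ violators_subset)
  by_cases hv : a ∈ violators μ pt C q
  · rw [rotatedPr_of_mem_violators hq hv]
    exact unbotD_min_le_default (hbound _ ((filter_subset _ _).trans violators_subset))
  · rw [rotatedPr_of_not_mem_violators hq haF hv]
    exact (C.prF_le_card haF).trans (Nat.le_succ _)

lemma insert_filter_prF_le_subset_filter_rotatedPr_le (hq : q ∉ C.QF) {k m : ℕ} (hkm : k ≤ m)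
    (hwin : m ≤ #C.QF → ∃ c ∈ violators μ pt C q, k < C.prF c ∧ C.prF c ≤ m) :
    insert q (C.QF.filter fun a => C.prF a ≤ k) ⊆
      (insert q C.QF).filter fun a => rotatedPr μ pt C q a ≤ m := by
  intro a ha
  refine mem_filter.mpr ⟨insert_subset_insert q (filter_subset _ _) ha, ?_⟩
  rcases le_or_gt m #C.QF with hm | hm
  · obtain ⟨c, hc, hkc, hcm⟩ := hwin hm
    rcases mem_insert.mp ha with rfl | ha
    · exact (rotatedPr_self_le hc).trans hcm
    obtain ⟨haF, hak⟩ := mem_filter.mp ha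
    by_cases hv : a ∈ violators μ pt C q
    · exact (rotatedPr_le_of_mem_violators hq hv hc (hak.trans_lt hkc)).trans hcm
    · rw [rotatedPr_of_not_mem_violators hq haF hv]
      exact hak.trans hkm
  · exact (rotatedPr_le_card_succ hq (insert_subset_insert q (filter_subset _ _) ha)).trans hm

variable {p : Fin n → ℝ}

lemma sum_filter_prF_le_le_sum_filter_rotatedPr_le (hq : q ∉ C.QF) (hp : ∀ a, 0 ≤ p a)
    (hviol : ∀ b ∈ violators μ pt C q, p b ≤ p q) (k : ℕ) :
    ∑ a ∈ C.QF.filter (fun a => C.prF a ≤ k), p a ≤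
      ∑ a ∈ (insert q C.QF).filter (fun a => rotatedPr μ pt C q a ≤ k), p a := by
  set O := C.QF.filter fun a => C.prF a ≤ k
  set N := (insert q C.QF).filter fun a => rotatedPr μ pt C q a ≤ k
  rcases ((violators μ pt C q).filter fun b => C.prF b ≤ k).eq_empty_or_nonempty with hOS | hOS
  · refine sum_le_sum_of_subset_of_nonneg (fun a ha => ?_) fun a _ _ => hp a
    obtain ⟨haF, hak⟩ := mem_filter.mp ha
    have hv : a ∉ violators μ pt C q := fun hv => filter_eq_empty_iff.mp hOS hv hak
    exact mem_filter.mpr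
      ⟨mem_insert_of_mem haF, (rotatedPr_of_not_mem_violators hq haF hv).trans_le hak⟩
  -- the violator `b` of highest priority covered at level `k` may be lost, but `q` takes its place
  obtain ⟨b, hbOS, hbmax⟩ := exists_max_image _ C.prF hOS
  obtain ⟨hb, hbk⟩ := mem_filter.mp hbOS
  have hbO : b ∈ O := mem_filter.mpr ⟨violators_subset hb, hbk⟩
  have hqO : q ∉ O.erase b := fun h => hq (filter_subset _ _ (erase_subset _ _ h))
  have hsub : insert q (O.erase b) ⊆ N := by
    intro a ha
    rcases mem_insert.mp ha with rfl | ha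
    · exact mem_filter.mpr ⟨mem_insert_self _ _, (rotatedPr_self_le hb).trans hbk⟩
    obtain ⟨hab, haO⟩ := mem_erase.mp ha
    obtain ⟨haF, hak⟩ := mem_filter.mp haO
    refine mem_filter.mpr ⟨mem_insert_of_mem haF, ?_⟩
    by_cases hv : a ∈ violators μ pt C q
    · have hlt : C.prF a < C.prF b := (hbmax a (mem_filter.mpr ⟨hv, hak⟩)).lt_of_ne
        fun h => hab (C.bijF.injOn haF (violators_subset hb) h)
      exact (rotatedPr_le_of_mem_violators hq hv hb hlt).trans hbk
    · exact (rotatedPr_of_not_mem_violators hq haF hv).trans_le hak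
  calc ∑ a ∈ O, p a = ∑ a ∈ O.erase b, p a + p b := (sum_erase_add _ _ hbO).symm
    _ ≤ p q + ∑ a ∈ O.erase b, p a := by linarith [hviol b hb]
    _ = ∑ a ∈ insert q (O.erase b), p a := (sum_insert hqO).symm
    _ ≤ ∑ a ∈ N, p a := sum_le_sum_of_subset_of_nonneg hsub fun a _ _ => hp a

lemma le_sum_filter_window (hpt : ∀ a, 0 < pt a)
    (hdist : ∀ a, pt a ≤ p a ∧ p a < μ * pt a) {k θ : ℕ} (hθ : μ ^ 2 ≤ θ)
    (hkθ : k + θ ≤ #C.QF)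
    (hwin : ∀ c ∈ C.QF, k < C.prF c → C.prF c ≤ k + θ → c ∉ violators μ pt C q) :
    p q ≤ ∑ c ∈ C.QF.filter (fun c => k < C.prF c ∧ C.prF c ≤ k + θ), p c := by
  have hμ : 0 < μ := by nlinarith [hpt q, hdist q]
  refine le_sum_of_le_mul_of_le_card (c := μ ^ 2) ((hpt q).le.trans (hdist q).1) (by positivity)
    ?_ fun c hc => ?_
  · rw [card_filter_window_of_bijOn C.bijF hkθ]
    exact hθ
  obtain ⟨hcF, hkc, hcθ⟩ := mem_filter.mp hc
  have hnv : pt q < μ * pt c := by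
    by_contra! h
    exact hwin c hcF hkc hcθ (mem_filter.mpr ⟨hcF, h⟩)
  calc p q ≤ μ * pt q := (hdist q).2.le
    _ ≤ μ * (μ * pt c) := by gcongr
    _ ≤ μ ^ 2 * p c := by rw [← mul_assoc, ← sq]; gcongr; exact (hdist c).1

theorem sum_filter_prF_le_add_le_sum_filter_rotatedPr_le (hq : q ∉ C.QF) (hpt : ∀ a, 0 < pt a)
    (hdist : ∀ a, pt a ≤ p a ∧ p a < μ * pt a) {θ : ℕ} (hθ : μ ^ 2 ≤ θ) (k : ℕ) :
    ∑ a ∈ C.QF.filter (fun a => C.prF a ≤ k), p a + p q ≤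
      ∑ a ∈ (insert q C.QF).filter (fun a => rotatedPr μ pt C q a ≤ k + θ), p a := by
  have hp : ∀ a, 0 ≤ p a := fun a => (hpt a).le.trans (hdist a).1
  set N := (insert q C.QF).filter fun a => rotatedPr μ pt C q a ≤ k + θ
  by_cases hwin :
      k + θ ≤ #C.QF → ∃ c ∈ violators μ pt C q, k < C.prF c ∧ C.prF c ≤ k + θ
  · have hqO : q ∉ C.QF.filter fun a => C.prF a ≤ k := fun h => hq (filter_subset _ _ h)
    rw [add_comm, ← sum_insert hqO]
    exact sum_le_sum_of_subset_of_nonneg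
      (insert_filter_prF_le_subset_filter_rotatedPr_le hq le_self_add hwin) fun a _ _ => hp a
  push Not at hwin
  obtain ⟨hkθ, hwin⟩ := hwin
  set E := C.QF.filter fun c => k < C.prF c ∧ C.prF c ≤ k + θ
  set Nk := (insert q C.QF).filter fun a => rotatedPr μ pt C q a ≤ k
  have hE : ∀ c ∈ E, rotatedPr μ pt C q c = C.prF c := fun c hc =>
    have hc := mem_filter.mp hc
    rotatedPr_of_not_mem_violators hq hc.1 fun hv => (hwin c hv hc.2.1).not_ge hc.2.2
  have hdisj : Disjoint Nk E := disjoint_right.mpr fun c hc hcN =>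
    ((mem_filter.mp hc).2.1.trans_le ((hE c hc).symm.trans_le (mem_filter.mp hcN).2)).false
  have hsub : Nk ∪ E ⊆ N := union_subset
    (monotone_filter_right _ fun a _ (h : rotatedPr μ pt C q a ≤ k) => h.trans le_self_add)
    fun c hc => mem_filter.mpr ⟨mem_insert_of_mem (filter_subset _ _ hc),
      (hE c hc).trans_le (mem_filter.mp hc).2.2⟩
  calc _ ≤ ∑ a ∈ Nk, p a + ∑ c ∈ E, p c := add_le_add
        (sum_filter_prF_le_le_sum_filter_rotatedPr_le hq hp
          (fun b hb => by linarith [(mem_filter.mp hb).2, hdist b, hdist q]) k)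
        (le_sum_filter_window hpt hdist hθ hkθ fun c _ hkc hcθ hv =>
          (hwin c hv hkc).not_ge hcθ)
    _ = ∑ a ∈ Nk ∪ E, p a := (sum_union hdisj).symm
    _ ≤ ∑ a ∈ N, p a := sum_le_sum_of_subset_of_nonneg hsub fun a _ _ => hp a

end Rotation

lemma ReleaseStep.rem_eq_of_mem_QF {μ : ℝ} {p pt : Fin n → ℝ} {C C' : Config n} {q : Fin n}
    (hstep : ReleaseStep μ p pt C C' q) (hfull : ∀ a ∈ C.QF, C.rem a = p a) :
    ∀ a ∈ C'.QF, C'.rem a = p a := by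
  obtain ⟨hqF, -, hQF', -, hremq, hrema, -⟩ := hstep
  intro a ha
  rcases mem_insert.mp (hQF' ▸ ha) with rfl | haF
  · exact hremq
  · rw [hrema a fun h => hqF (h ▸ haF), hfull a haF]

theorem release_cov_gain_general
    (n : ℕ) (μ : ℝ) (p pt : Fin n → ℝ)
    (hpt : ∀ q, 0 < pt q)
    (hdist : ∀ q, pt q ≤ p q ∧ p q < μ * pt q)
    (C C' : Config n) (q : Fin n)
    (hfull : ∀ a ∈ C.QF, C.rem a = p a)
    (hrem : ∀ a, 0 ≤ C.rem a)
    (hstep : ReleaseStep μ p pt C C' q) :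
    ∀ x : ℝ, 0 ≤ x → cov C x + p q ≤ cov C' (x + ((⌈μ ^ 2⌉ : ℤ) : ℝ)) := by
  have hrem' := hstep.rem_eq_of_mem_QF hfull
  obtain ⟨hqF, hqP, hQF', hQP', -, hrema, hprF', hprP'⟩ := hstep
  intro x hx
  set θ := ⌈μ ^ 2⌉₊
  have hfullBin :
      binCov C.QF C.prF C.rem x = ∑ a ∈ C.QF.filter (fun a => C.prF a ≤ ⌊x⌋₊), p a := by
    rw [binCov_congr (fun _ _ => rfl) hfull, binCov_eq_sum_filter hx]
  have hfullBin' : binCov C'.QF C'.prF C'.rem (x + θ) = ∑ a ∈ (insert q C.QF).filter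
      (fun a => rotatedPr μ pt C q a ≤ ⌊x⌋₊ + θ), p a := by
    rw [binCov_congr hprF' hrem', binCov_eq_sum_filter (by positivity), Nat.floor_add_natCast hx,
      hQF']
  have hpartBin : binCov C.QP C.prP C.rem x ≤ binCov C'.QP C'.prP C'.rem (x + θ) := by
    rw [hQP', binCov_congr (pr' := C.prP) (rem' := C.rem) hprP'
      fun a ha => hrema a fun h => hqP (h ▸ ha)]
    exact binCov_mono (fun a _ => hrem a) (le_add_of_nonneg_right (Nat.cast_nonneg θ))
  rw [← natCast_ceil_eq_intCast_ceil (sq_nonneg μ), cov_eq_binCov_add_binCov,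
    cov_eq_binCov_add_binCov]
  linarith [sum_filter_prF_le_add_le_sum_filter_rotatedPr_le hqF hpt hdist (Nat.le_ceil (μ ^ 2))
    ⌊x⌋₊]

/-- In a run of Algorithm 2 on an unweighted SPPT instance with
distortion at most `μ` (so that, by Proposition `UW_NoViolations`, the configuration
just before a release contains no violations, and the jobs of the full bin are full),
if a job `q` is released at time `t` then, with `θ = ⌈μ²⌉`, for every `x ≥ 0`:
`cov(x + θ, t) ≥ cov(x, t⁻) + p(q)`. -/
theorem release_cov_gain
    (n : ℕ) (μ : ℝ) (p pt : Fin n → ℝ)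
    (hp : ∀ q, 0 < p q) (hpt : ∀ q, 0 < pt q)
    (hdist : ∀ q, pt q ≤ p q ∧ p q < μ * pt q)
    (C C' : Config n) (q : Fin n)
    (hfull : ∀ a ∈ C.QF, C.rem a = p a)
    (hrem : ∀ a, 0 ≤ C.rem a)
    (hnv : NoViolations μ pt C)
    (hstep : ReleaseStep μ p pt C C' q) :
    ∀ x : ℝ, 0 ≤ x → cov C x + p q ≤ cov C' (x + ((⌈μ ^ 2⌉ : ℤ) : ℝ)) :=
  release_cov_gain_general n μ p pt hpt hdist C C' q hfull hrem hstep
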